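/- Let L_0 = ∂_t and L_1 = e^{−t}∂_t be vector fields on ℝ³ (coordinates (t,x,u)). If Q is a smooth vector field on ℝ³ satisfying [L_0, Q] = Q and [L_1, Q] = 2L_0, then Q = e^{t}∂_t. (This is Case 1 of the proof of Lemma 1: given L_0 = ∂_t, L_1 = e^{−t}∂_t, the operator L_{−1} of the sl(2,ℝ) triple is necessarily e^{t}∂_t.) -/

import Mathlib

/-!
Write `L₁ = f • L₀` with `f(t,x,u) = e^{-t}`. The Leibniz rule for the bracket and
`[L₀, Q] = Q` give `[L₁, Q] = f • [L₀, Q] - (df Q) • L₀ = e^{-t} • Q + e^{-t} Q_t • ∂_t`,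
so `[L₁, Q] = 2 ∂_t` reads `2 e^{-t} Q_t = 2` and `e^{-t} Q_x = e^{-t} Q_u = 0`.
-/

/-- Lie bracket of smooth vector fields on `ℝ³` (coordinates `(t,x,u)`), identified with
`C^∞` maps `ℝ³ → ℝ³`: `[X,Y](p) = (DY)(p)(X(p)) - (DX)(p)(Y(p))`. -/
noncomputable def lieBracket3 (X Y : ℝ × ℝ × ℝ → ℝ × ℝ × ℝ) : ℝ × ℝ × ℝ → ℝ × ℝ × ℝ :=
  fun p => fderiv ℝ Y p (X p) - fderiv ℝ X p (Y p)

open VectorField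

theorem lieBracket3_eq_lieBracket : lieBracket3 = lieBracket ℝ := rfl

theorem lieBracket_smul_const_left_of_lieBracket_eq_self {E : Type*} [NormedAddCommGroup E]
    [NormedSpace ℝ E] {f : E → ℝ} {c x : E} {W : E → E} (hf : DifferentiableAt ℝ f x)
    (hW : lieBracket ℝ (fun _ => c) W x = W x) :
    lieBracket ℝ (fun y => f y • c) W x = f x • W x - fderiv ℝ f x (W x) • c := by
  rw [lieBracket_smul_left hf (differentiableAt_const c), hW, neg_smul, neg_add_eq_sub]

theorem fderiv_exp_neg_fst_apply {F : Type*} [NormedAddCommGroup F] [NormedSpace ℝ F]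
    (p w : ℝ × F) :
    fderiv ℝ (fun q : ℝ × F => Real.exp (-q.1)) p w = -Real.exp (-p.1) * w.1 := by
  have h : HasFDerivAt (fun q : ℝ × F => Real.exp (-q.1))
      ((Real.exp (-p.1) * -1) • ContinuousLinearMap.fst ℝ ℝ F) p :=
    ((Real.hasDerivAt_exp (-p.1)).comp p.1 (hasDerivAt_neg p.1)).comp_hasFDerivAt p hasFDerivAt_fst
  simp [h.fderiv]

theorem Lminus1_unique_case1 (Q : ℝ × ℝ × ℝ → ℝ × ℝ × ℝ)
    (h0 : lieBracket3 (fun _ => (1, 0, 0)) Q = Q)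
    (h1 : lieBracket3 (fun p => (Real.exp (-p.1), 0, 0)) Q = fun _ => (2, 0, 0)) :
    Q = fun p => (Real.exp p.1, 0, 0) := by
  funext p
  have hL₁ : (fun q : ℝ × ℝ × ℝ => ((Real.exp (-q.1), 0, 0) : ℝ × ℝ × ℝ)) =
      fun q => Real.exp (-q.1) • ((1, 0, 0) : ℝ × ℝ × ℝ) := by
    funext q; simp
  have h1p := congrFun h1 p
  rw [lieBracket3_eq_lieBracket, hL₁, lieBracket_smul_const_left_of_lieBracket_eq_self
    (by fun_prop) (congrFun h0 p), fderiv_exp_neg_fst_apply] at h1p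
  rcases hQp : Q p with ⟨a, b, c⟩
  rw [hQp] at h1p
  simp only [Prod.smul_mk, Prod.mk_sub_mk, smul_eq_mul, Prod.mk.injEq, mul_one, mul_zero,
    sub_zero] at h1p
  obtain ⟨ha, hb, hc⟩ := h1p
  have hexp := Real.exp_pos p.1
  rw [Real.exp_neg] at ha hb hc
  simp only [Prod.mk.injEq]
  refine ⟨?_, ?_, ?_⟩
  · field_simp at ha; linarith
  · simpa [hexp.ne'] using hb
  · simpa [hexp.ne'] using hc
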